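/- Let X be a Banach space whose dual unit ball (B_{X*}, w*) admits a regular Borel probability measure μ such that L¹(μ) is non-separable, let i : X → C(B_{X*}) be the canonical embedding and S := u ∘ i where u : C(B_{X*}) → L¹(μ) is the formal inclusion. Then S(B_X) is non-separable in L¹(μ). -/

import Mathlib

/-!
Suppose `S(B_X)` is separable and pick a countable `D ⊆ B_X` with `S(D)` dense in `S(B_X)`.
All functions `i(x)`, `x ∈ B_X`, have sup norm at most one, and for such functions
`‖fg - f'g'‖₁ ≤ ‖f - f'‖₁ + ‖g - g'‖₁`. Hence the `L¹`-classes of finite products of elements of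
`i(B_X)` lie in the closure of the countably many classes of finite products of elements of
`i(D)`, so the image of the algebra generated by `i(B_X)` is separable. By Stone–Weierstrass this
algebra is dense in `C(B_{X*})`, which by regularity of `μ` is dense in `L¹(μ)`; so `L¹(μ)` would
be separable.
-/

open MeasureTheory NormedSpace TopologicalSpace

variable (X : Type*) [NormedAddCommGroup X] [NormedSpace ℝ X]

/-- The closed unit ball of the dual of `X`, equipped with the weak* topology
(a compact space, by the Banach–Alaoglu theorem). -/
def dualBall : Set (WeakDual ℝ X) :=
  WeakDual.toStrongDual ⁻¹' Metric.closedBall (0 : StrongDual ℝ X) 1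

instance : CompactSpace (dualBall X) :=
  isCompact_iff_compactSpace.mp (WeakDual.isCompact_closedBall (𝕜 := ℝ) (E := X) 0 1)

noncomputable instance : MeasurableSpace (dualBall X) := borel _

instance : BorelSpace (dualBall X) := ⟨rfl⟩

/-- The canonical embedding `i : X → C(B_{X*})`, `i(x)(x*) = x*(x)`. -/
noncomputable def canonicalEmbeddingCK (x : X) : C(dualBall X, ℝ) :=
  ContinuousMap.mk (fun φ : dualBall X => (φ : WeakDual ℝ X) x)
    ((WeakDual.eval_continuous x).comp continuous_subtype_val)

open Metric
open scoped ENNReal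

lemma TopologicalSpace.IsSeparable.exists_countable_dense_subset_of_image {α β : Type*}
    [TopologicalSpace β] [PseudoMetrizableSpace β] {f : α → β} {s : Set α}
    (hs : IsSeparable (f '' s)) : ∃ t ⊆ s, t.Countable ∧ f '' s ⊆ closure (f '' t) := by
  obtain ⟨c, hcs, hc, hsc⟩ := hs.exists_countable_dense_subset
  obtain ⟨t, hts, hbij⟩ := Set.exists_subset_bijOn (s ∩ f ⁻¹' c) f
  rw [Set.image_inter_preimage, Set.inter_eq_right.mpr hcs] at hbij
  exact ⟨t, hts.trans Set.inter_subset_left, hbij.mapsTo.countable_of_injOn hbij.injOn hc,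
    hbij.image_eq ▸ hsc⟩

namespace ContinuousMap

variable {K : Type*} [TopologicalSpace K] [CompactSpace K]

lemma submonoidClosure_subset_closedBall {T : Set C(K, ℝ)} (hT : T ⊆ closedBall 0 1) :
    (Submonoid.closure T : Set C(K, ℝ)) ⊆ closedBall 0 1 := by
  intro f hf
  rw [mem_closedBall_zero_iff]
  induction hf using Submonoid.closure_induction with
  | mem f hf => exact mem_closedBall_zero_iff.mp (hT hf)
  | one => exact (norm_le _ zero_le_one).mpr fun _ => by simp
  | mul f g _ _ hf hg => exact (norm_mul_le f g).trans (mul_le_one₀ hf (norm_nonneg g) hg)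

variable [MeasurableSpace K] [BorelSpace K] {p : ℝ≥0∞} [Fact (1 ≤ p)] (μ : Measure K)
  [IsFiniteMeasure μ]

lemma norm_toLp_mul_le (f g : C(K, ℝ)) :
    ‖toLp p μ ℝ (f * g)‖ ≤ ‖f‖ * ‖toLp p μ ℝ g‖ := by
  refine Lp.norm_le_mul_norm_of_ae_le_mul ?_
  filter_upwards [coeFn_toLp (p := p) μ (f * g) (𝕜 := ℝ), coeFn_toLp (p := p) μ g (𝕜 := ℝ)]
    with x hfg hg
  rw [hfg, hg, mul_apply, norm_mul]
  exact mul_le_mul_of_nonneg_right (norm_coe_le_norm f x) (norm_nonneg _)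

lemma dist_toLp_mul_le {f g f' g' : C(K, ℝ)} (hf : ‖f‖ ≤ 1) (hg' : ‖g'‖ ≤ 1) :
    dist (toLp p μ ℝ (f * g)) (toLp p μ ℝ (f' * g')) ≤
      dist (toLp p μ ℝ f) (toLp p μ ℝ f') + dist (toLp p μ ℝ g) (toLp p μ ℝ g') := by
  have hsplit : f * g - f' * g' = g' * (f - f') + f * (g - g') := by ring
  rw [dist_eq_norm, dist_eq_norm, dist_eq_norm, ← map_sub, ← map_sub, ← map_sub, hsplit, map_add]
  calc _ ≤ ‖toLp p μ ℝ (g' * (f - f'))‖ + ‖toLp p μ ℝ (f * (g - g'))‖ := norm_add_le _ _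
    _ ≤ 1 * ‖toLp p μ ℝ (f - f')‖ + 1 * ‖toLp p μ ℝ (g - g')‖ := by
        gcongr <;> exact (norm_toLp_mul_le μ _ _).trans (by gcongr)
    _ = _ := by simp only [one_mul]

lemma toLp_mul_mem_closure {M : Submonoid C(K, ℝ)} (hM : (M : Set C(K, ℝ)) ⊆ closedBall 0 1)
    {f g : C(K, ℝ)} (hf : ‖f‖ ≤ 1)
    (hfM : toLp p μ ℝ f ∈ closure (toLp p μ ℝ '' (M : Set C(K, ℝ))))
    (hgM : toLp p μ ℝ g ∈ closure (toLp p μ ℝ '' (M : Set C(K, ℝ)))) :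
    toLp p μ ℝ (f * g) ∈ closure (toLp p μ ℝ '' (M : Set C(K, ℝ))) := by
  refine Metric.mem_closure_iff.mpr fun ε hε => ?_
  obtain ⟨-, ⟨m, hm, rfl⟩, hfm⟩ := Metric.mem_closure_iff.mp hfM (ε / 2) (half_pos hε)
  obtain ⟨-, ⟨m', hm', rfl⟩, hgm'⟩ := Metric.mem_closure_iff.mp hgM (ε / 2) (half_pos hε)
  refine ⟨_, ⟨m * m', M.mul_mem hm hm', rfl⟩, ?_⟩
  calc _ ≤ _ := dist_toLp_mul_le μ hf (mem_closedBall_zero_iff.mp (hM hm'))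
    _ < ε / 2 + ε / 2 := add_lt_add hfm hgm'
    _ = ε := add_halves ε

lemma toLp_image_submonoidClosure_subset {T : Set C(K, ℝ)} (hT : T ⊆ closedBall 0 1)
    {M : Submonoid C(K, ℝ)} (hM : (M : Set C(K, ℝ)) ⊆ closedBall 0 1)
    (hTM : toLp p μ ℝ '' T ⊆ closure (toLp p μ ℝ '' (M : Set C(K, ℝ)))) :
    toLp p μ ℝ '' (Submonoid.closure T : Set C(K, ℝ)) ⊆
      closure (toLp p μ ℝ '' (M : Set C(K, ℝ))) := by
  rintro - ⟨f, hf, rfl⟩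
  induction hf using Submonoid.closure_induction with
  | mem f hf => exact hTM ⟨f, hf, rfl⟩
  | one => exact subset_closure ⟨1, M.one_mem, rfl⟩
  | mul f g hf _ hfM hgM =>
    have hf1 := mem_closedBall_zero_iff.mp (submonoidClosure_subset_closedBall hT hf)
    exact toLp_mul_mem_closure μ hM hf1 hfM hgM

lemma isSeparable_toLp_image_submonoidClosure {T : Set C(K, ℝ)} (hT : T ⊆ closedBall 0 1)
    (hTs : IsSeparable (toLp p μ ℝ '' T)) :
    IsSeparable (toLp p μ ℝ '' (Submonoid.closure T : Set C(K, ℝ))) := by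
  obtain ⟨D, hDT, hD, hTD⟩ := hTs.exists_countable_dense_subset_of_image
  have hDc : (Submonoid.closure D : Set C(K, ℝ)).Countable := by
    have := hD.to_subtype
    rw [Submonoid.closure_eq_mrange, MonoidHom.coe_mrange]
    exact Set.countable_range _
  refine ((hDc.image (toLp p μ ℝ)).isSeparable.closure).mono ?_
  exact toLp_image_submonoidClosure_subset μ hT
    (submonoidClosure_subset_closedBall (hDT.trans hT))
    (hTD.trans (closure_mono (Set.image_mono Submonoid.subset_closure)))

theorem separableSpace_Lp_of_isSeparable_toLp_image [NormalSpace K] [μ.WeaklyRegular]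
    (hp : p ≠ ∞) {T : Set C(K, ℝ)} (hT : T ⊆ closedBall 0 1)
    (hTpts : (Algebra.adjoin ℝ T).SeparatesPoints)
    (hTs : IsSeparable (toLp p μ ℝ '' T)) :
    SeparableSpace (Lp ℝ p μ) := by
  have hsep : IsSeparable (toLp p μ ℝ '' (Algebra.adjoin ℝ T : Set C(K, ℝ))) := by
    rw [← Subalgebra.coe_toSubmodule, Algebra.adjoin_eq_span]
    exact (isSeparable_toLp_image_submonoidClosure μ hT hTs).span.mono
      (Submodule.image_span_subset_span (toLp p μ ℝ).toLinearMap _)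
  have hdense : Dense (Algebra.adjoin ℝ T : Set C(K, ℝ)) := by
    rw [dense_iff_closure_eq, ← Subalgebra.topologicalClosure_coe,
      subalgebra_topologicalClosure_eq_top_of_separatesPoints _ hTpts, Algebra.coe_top]
  have himage : Dense (toLp p μ ℝ '' (Algebra.adjoin ℝ T : Set C(K, ℝ))) :=
    (toLp_denseRange ℝ μ ℝ hp).dense_image (toLp p μ ℝ).continuous hdense
  exact isSeparable_univ_iff.mp (himage.closure_eq ▸ hsep.closure)

end ContinuousMap

lemma norm_canonicalEmbeddingCK_le (x : X) : ‖canonicalEmbeddingCK X x‖ ≤ ‖x‖ :=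
  (ContinuousMap.norm_le _ (norm_nonneg x)).mpr fun φ =>
    ((WeakDual.toStrongDual (φ : WeakDual ℝ X)).le_opNorm x).trans
      (mul_le_of_le_one_left (norm_nonneg x) (mem_closedBall_zero_iff.mp φ.2))

lemma canonicalEmbeddingCK_image_closedBall_subset :
    canonicalEmbeddingCK X '' closedBall 0 1 ⊆ closedBall 0 1 := by
  rintro - ⟨x, hx, rfl⟩
  exact mem_closedBall_zero_iff.mpr
    ((norm_canonicalEmbeddingCK_le X x).trans (mem_closedBall_zero_iff.mp hx))

lemma separatesPoints_adjoin_canonicalEmbeddingCK :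
    (Algebra.adjoin ℝ (canonicalEmbeddingCK X '' closedBall 0 1)).SeparatesPoints := by
  intro φ ψ hne
  obtain ⟨x, hx⟩ : ∃ x : X, (φ : WeakDual ℝ X) x ≠ (ψ : WeakDual ℝ X) x :=
    DFunLike.ne_iff.mp (Subtype.coe_injective.ne hne)
  have hc : 0 < (‖x‖ + 1)⁻¹ := by positivity
  have hcx : (‖x‖ + 1)⁻¹ • x ∈ closedBall (0 : X) 1 := by
    rw [mem_closedBall_zero_iff, norm_smul, Real.norm_of_nonneg hc.le,
      inv_mul_le_iff₀ (by positivity)]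
    linarith
  refine ⟨_, ⟨_, Algebra.subset_adjoin ⟨_, hcx, rfl⟩, rfl⟩, ?_⟩
  simpa [canonicalEmbeddingCK, hc.ne'] using hx

theorem nonseparable_image_ball_in_L1
    (μ : Measure (dualBall X)) [IsProbabilityMeasure μ] [μ.Regular]
    (hL1 : ¬ SeparableSpace (Lp ℝ 1 μ)) :
    ¬ IsSeparable
      ((fun x : X => ContinuousMap.toLp 1 μ ℝ (canonicalEmbeddingCK X x)) ''
        Metric.closedBall (0 : X) 1) := by
  intro hS
  rw [← Set.image_image] at hS
  exact hL1 (ContinuousMap.separableSpace_Lp_of_isSeparable_toLp_image μ ENNReal.one_ne_top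
    (canonicalEmbeddingCK_image_closedBall_subset X)
    (separatesPoints_adjoin_canonicalEmbeddingCK X) hS)
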